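/- Every element of Sp(2n, F_2) can be written as a product of at most 4n symplectic transvections; that is, for every S in Sp(2n, F_2) there exist vectors h_1, …, h_m in F_2^{2n} with m ≤ 4n such that S = Z_{h_1} Z_{h_2} ⋯ Z_{h_m} as linear maps on F_2^{2n}. -/

import Mathlib

open Matrix Finset

/-- `Λ(n)`: the `2n × 2n` block-diagonal matrix over `F₂` that is the direct sum of
`n` copies of `[[0,1],[1,0]]`. -/
def Lam (n : ℕ) : Matrix (Fin (2 * n)) (Fin (2 * n)) (ZMod 2) :=
  Matrix.of fun i j => if i.val / 2 = j.val / 2 ∧ i ≠ j then 1 else 0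

/-- The symplectic inner product `⟨v, w⟩ = vᵀ Λ(n) w` on `F₂^{2n}`. -/
def sip {n : ℕ} (v w : Fin (2 * n) → ZMod 2) : ZMod 2 :=
  v ⬝ᵥ (Lam n).mulVec w

/-- `Sp(2n, F₂)`: the set of `2n × 2n` matrices `S` over `F₂` with `S Λ(n) Sᵀ = Λ(n)`. -/
def Sp (n : ℕ) : Set (Matrix (Fin (2 * n)) (Fin (2 * n)) (ZMod 2)) :=
  {S | S * Lam n * Sᵀ = Lam n}

/-- The symplectic transvection `Z_h : v ↦ v + ⟨v, h⟩ h`. -/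
def Zt {n : ℕ} (h v : Fin (2 * n) → ZMod 2) : Fin (2 * n) → ZMod 2 :=
  v + sip v h • h

/-!
Induct along the hyperbolic pairs `(e_{2k}, e_{2k+1})`. An isometry `g` fixing `e_j` for `j < 2k`
preserves their orthogonal complement `W_k`, which is nondegenerate. Any two nonzero vectors `a, b`
of a nondegenerate space are joined by two transvections, `Z_{z+b} Z_{a+z} a = b` for any `z` with
`⟨a, z⟩ = ⟨z, b⟩ = 1`; taking the centres in `W_k` keeps `e_j` fixed for `j < 2k`. So two
transvections send `g e_{2k}` to `e_{2k}`, and two more, with centres also orthogonal to `e_{2k}`,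
send the new image of `e_{2k+1}` to `e_{2k+1}`. After `n` steps `Z_{h_m} ⋯ Z_{h_1} S` fixes the
standard basis, hence is the identity, and `S` is the reversed product since each `Z_h` is an
involution.
-/

abbrev Vec (n : ℕ) := Fin (2 * n) → ZMod 2

lemma zmod_two_eq_zero_or_one (x : ZMod 2) : x = 0 ∨ x = 1 := by
  revert x; decide

variable {n : ℕ}

def partner (i : Fin (2 * n)) : Fin (2 * n) :=
  ⟨if i.val % 2 = 0 then i.val + 1 else i.val - 1, by split <;> omega⟩

lemma partner_involutive : Function.Involutive (partner (n := n)) := by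
  intro i; ext; simp only [partner]; split <;> split <;> omega

@[simp]
lemma partner_partner (i : Fin (2 * n)) : partner (partner i) = i :=
  partner_involutive i

lemma partner_ne (i : Fin (2 * n)) : partner i ≠ i := by
  rw [Ne, Fin.ext_iff]; simp only [partner]; split <;> omega

lemma partner_lt_iff (i : Fin (2 * n)) (k : ℕ) : (partner i).val < 2 * k ↔ i.val < 2 * k := by
  simp only [partner]; split <;> omega

lemma Lam_apply (i j : Fin (2 * n)) : Lam n i j = if j = partner i then 1 else 0 := by
  have : i.val / 2 = j.val / 2 ∧ i ≠ j ↔ j = partner i := by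
    simp only [Ne, Fin.ext_iff, partner]; split <;> omega
  simp only [Lam, of_apply, this]

lemma Lam_mul_self : Lam n * Lam n = 1 := by
  ext i j
  rw [mul_apply, Finset.sum_eq_single (partner i) (fun k _ hk => by simp [Lam_apply, hk])
    (by simp), Lam_apply, Lam_apply, one_apply, partner_partner]
  simp [eq_comm]

lemma sip_eq_sum (v w : Vec n) : sip v w = ∑ i, v i * w (partner i) := by
  simp [sip, dotProduct, mulVec, Lam_apply]

@[simp]
lemma sip_single_left (j : Fin (2 * n)) (v : Vec n) : sip (Pi.single j 1) v = v (partner j) := by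
  rw [sip_eq_sum, Finset.sum_eq_single j (fun i _ hij => by simp [hij]) (by simp)]
  simp

lemma sip_comm (v w : Vec n) : sip v w = sip w v := by
  rw [sip_eq_sum, sip_eq_sum]
  exact Fintype.sum_equiv partner_involutive.toPerm _ _
    fun i => by simp [partner_partner, mul_comm]

@[simp]
lemma sip_self (v : Vec n) : sip v v = 0 := by
  rw [sip_eq_sum]
  refine Finset.sum_involution (fun i _ => partner i) (fun i _ => ?_)
    (fun i _ _ => partner_ne i) (fun i _ => Finset.mem_univ _) (fun i _ => partner_involutive i)
  rw [partner_partner, mul_comm]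
  exact CharTwo.add_self_eq_zero _

@[simp]
lemma sip_add_left (u v w : Vec n) : sip (u + v) w = sip u w + sip v w :=
  add_dotProduct _ _ _

@[simp]
lemma sip_add_right (u v w : Vec n) : sip u (v + w) = sip u v + sip u w := by
  simp [sip, mulVec_add]

@[simp]
lemma sip_smul_left (c : ZMod 2) (v w : Vec n) : sip (c • v) w = c * sip v w :=
  smul_dotProduct _ _ _

@[simp]
lemma sip_smul_right (c : ZMod 2) (v w : Vec n) : sip v (c • w) = c * sip v w := by
  simp [sip, mulVec_smul]

@[simp]
lemma sip_zero_left (w : Vec n) : sip 0 w = 0 :=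
  zero_dotProduct _

lemma sip_mulVec_mulVec {S : Matrix (Fin (2 * n)) (Fin (2 * n)) (ZMod 2)} (hS : S ∈ Sp n)
    (v w : Vec n) : sip (S *ᵥ v) (S *ᵥ w) = sip v w := by
  have hS' : S * (Lam n * Sᵀ * Lam n) = 1 := by
    rw [← Matrix.mul_assoc, ← Matrix.mul_assoc, show S * Lam n * Sᵀ = Lam n from hS, Lam_mul_self]
  have hSt : Sᵀ * Lam n * S = Lam n := by
    calc Sᵀ * Lam n * S = Lam n * (Lam n * Sᵀ * Lam n * S) := by
          simp only [← Matrix.mul_assoc, Lam_mul_self, Matrix.one_mul]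
      _ = Lam n := by rw [mul_eq_one_comm.mp hS', Matrix.mul_one]
  rw [sip, sip, dotProduct_comm, dotProduct_mulVec, dotProduct_comm, ← mulVec_transpose]
  simp only [mulVec_mulVec, ← Matrix.mul_assoc, hSt]

lemma Zt_add (h v w : Vec n) : Zt h (v + w) = Zt h v + Zt h w := by
  simp only [Zt, sip_add_left, add_smul]; abel

lemma sip_Zt_Zt (h v w : Vec n) : sip (Zt h v) (Zt h w) = sip v w := by
  simp only [Zt, sip_add_left, sip_add_right, sip_smul_left, sip_smul_right, sip_self,
    sip_comm h w]
  linear_combination CharTwo.add_self_eq_zero (sip v h * sip w h)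

lemma Zt_Zt (h v : Vec n) : Zt h (Zt h v) = v := by
  simp only [Zt, sip_add_left, sip_smul_left, sip_self, mul_zero, add_zero, add_assoc,
    ← add_smul, CharTwo.add_self_eq_zero, zero_smul]

lemma Zt_of_sip_eq_zero {h v : Vec n} (hv : sip v h = 0) : Zt h v = v := by
  simp [Zt, hv]

lemma Zt_add_of_sip_eq_one {x y : Vec n} (hxy : sip x y = 1) : Zt (x + y) x = y := by
  simp [Zt, hxy, ← add_assoc, ZModModule.add_self]

lemma foldr_Zt_add (l : List (Vec n)) (v w : Vec n) :
    l.foldr Zt (v + w) = l.foldr Zt v + l.foldr Zt w := by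
  induction l with
  | nil => rfl
  | cons h l ih => simp only [List.foldr_cons, ih, Zt_add]

lemma sip_foldr_Zt (l : List (Vec n)) (v w : Vec n) :
    sip (l.foldr Zt v) (l.foldr Zt w) = sip v w := by
  induction l with
  | nil => rfl
  | cons h l ih => simp only [List.foldr_cons, sip_Zt_Zt, ih]

lemma foldr_Zt_reverse_foldr_Zt (l : List (Vec n)) (v : Vec n) :
    l.reverse.foldr Zt (l.foldr Zt v) = v := by
  induction l generalizing v with
  | nil => rfl
  | cons h l ih => simp [Zt_Zt, ih]

lemma foldr_Zt_of_sip_eq_zero {l : List (Vec n)} {v : Vec n} (hl : ∀ h ∈ l, sip v h = 0) :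
    l.foldr Zt v = v := by
  induction l with
  | nil => rfl
  | cons h l ih =>
    simp only [List.mem_cons, forall_eq_or_imp] at hl
    rw [List.foldr_cons, ih hl.2, Zt_of_sip_eq_zero hl.1]

lemma Zt_Zt_of_sip_eq_one {x y z : Vec n} (hxz : sip x z = 1) (hzy : sip z y = 1) :
    Zt (z + y) (Zt (x + z) x) = y := by
  rw [Zt_add_of_sip_eq_one hxz, Zt_add_of_sip_eq_one hzy]

section Transitivity

variable {U : Submodule (ZMod 2) (Vec n)}

lemma exists_sip_eq_one_of_ne_zero (hU : ∀ a ∈ U, a ≠ 0 → ∃ u ∈ U, sip a u = 1)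
    {a b : Vec n} (ha : a ∈ U) (hb : b ∈ U) (ha0 : a ≠ 0) (hb0 : b ≠ 0) :
    ∃ z ∈ U, sip a z = 1 ∧ sip z b = 1 := by
  obtain hab | hab := zmod_two_eq_zero_or_one (sip a b)
  · obtain ⟨u, hu, hau⟩ := hU a ha ha0
    obtain ⟨w, hw, hbw⟩ := hU b hb hb0
    rw [sip_comm] at hbw
    obtain hub | hub := zmod_two_eq_zero_or_one (sip u b)
    · obtain haw | haw := zmod_two_eq_zero_or_one (sip a w)
      · exact ⟨u + w, add_mem hu hw, by simp [hau, haw], by simp [hub, hbw]⟩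
      · exact ⟨w, hw, haw, hbw⟩
    · exact ⟨u, hu, hau, hub⟩
  · exact ⟨a + b, add_mem ha hb, by simp [hab], by simp [hab]⟩

lemma exists_transvections_map (hU : ∀ a ∈ U, a ≠ 0 → ∃ u ∈ U, sip a u = 1)
    {a b : Vec n} (ha : a ∈ U) (hb : b ∈ U) (ha0 : a ≠ 0) (hb0 : b ≠ 0) :
    ∃ l : List (Vec n), l.length ≤ 2 ∧ (∀ h ∈ l, h ∈ U) ∧ l.foldr Zt a = b := by
  obtain ⟨z, hz, haz, hzb⟩ := exists_sip_eq_one_of_ne_zero hU ha hb ha0 hb0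
  refine ⟨[z + b, a + z], le_rfl, ?_, Zt_Zt_of_sip_eq_one haz hzb⟩
  simp [add_mem hz hb, add_mem ha hz]

lemma exists_transvections_map_fixing {a x y : Vec n} (ha : a ∈ U) (hx : x ∈ U) (hy : y ∈ U)
    (hax : sip a x = 1) (hay : sip a y = 1) :
    ∃ l : List (Vec n), l.length ≤ 2 ∧ (∀ h ∈ l, h ∈ U ∧ sip a h = 0) ∧ l.foldr Zt x = y := by
  obtain hxy | hxy := zmod_two_eq_zero_or_one (sip x y)
  · -- `z = a + y` pairs to one with `x` and `y`, and the centres `z + y = a`, `x + z` are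
    -- orthogonal to `a`
    have hxz : sip x (a + y) = 1 := by simp [sip_comm x a, hax, hxy]
    have hzy : sip (a + y) y = 1 := by simp [hay]
    refine ⟨[a + y + y, x + (a + y)], le_rfl, ?_, Zt_Zt_of_sip_eq_one hxz hzy⟩
    simp [hay, hax, add_mem, ha, hx, hy, ZModModule.add_self]
  · refine ⟨[x + y], by simp, ?_, by simp [Zt_add_of_sip_eq_one hxy]⟩
    simp [add_mem hx hy, hax, hay, ZModModule.add_self]

end Transitivity

/-- `W_k`, the orthogonal complement of the first `k` hyperbolic planes. -/
def tailSpace (n k : ℕ) : Submodule (ZMod 2) (Vec n) :=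
  Submodule.pi {j | j.val < 2 * k} fun _ => ⊥

lemma mem_tailSpace_iff {k : ℕ} {v : Vec n} :
    v ∈ tailSpace n k ↔ ∀ j : Fin (2 * n), j.val < 2 * k → v j = 0 := by
  simp [tailSpace, Submodule.mem_pi]

lemma mem_tailSpace_iff_sip {k : ℕ} {v : Vec n} :
    v ∈ tailSpace n k ↔ ∀ j : Fin (2 * n), j.val < 2 * k → sip (Pi.single j 1) v = 0 := by
  rw [mem_tailSpace_iff]
  refine ⟨fun hv j hj => ?_, fun hv j hj => ?_⟩
  · simpa using hv _ ((partner_lt_iff j k).2 hj)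
  · simpa using hv (partner j) ((partner_lt_iff j k).2 hj)

lemma single_mem_tailSpace {k : ℕ} {i : Fin (2 * n)} (hi : 2 * k ≤ i.val) :
    Pi.single i 1 ∈ tailSpace n k :=
  mem_tailSpace_iff.2 fun j hj => Pi.single_eq_of_ne (by omega) _

lemma exists_sip_eq_one_of_mem_tailSpace {k : ℕ} :
    ∀ a ∈ tailSpace n k, a ≠ 0 → ∃ u ∈ tailSpace n k, sip a u = 1 := by
  intro a ha ha0
  obtain ⟨i, hi⟩ := Function.ne_iff.1 ha0
  have hik : 2 * k ≤ i.val := by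
    by_contra! h
    exact hi (mem_tailSpace_iff.1 ha i h)
  refine ⟨Pi.single (partner i) 1, single_mem_tailSpace ?_, ?_⟩
  · have := partner_lt_iff i k; omega
  · rw [sip_comm, sip_single_left, partner_partner]
    exact (zmod_two_eq_zero_or_one _).resolve_left hi

lemma sip_single_single_of_val_eq {k : ℕ} {p q : Fin (2 * n)} (hp : p.val = 2 * k)
    (hq : q.val = 2 * k + 1) : sip (Pi.single p 1) (Pi.single q 1) = 1 := by
  have : q = partner p := by ext; simp [partner, hp, hq]
  simp [this]

def FixesBelow (m : ℕ) (g : Vec n → Vec n) : Prop :=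
  ∀ j : Fin (2 * n), j.val < m → g (Pi.single j 1) = Pi.single j 1

section Fixing

variable {g : Vec n → Vec n}

lemma FixesBelow.mono {m m' : ℕ} (h : FixesBelow m' g) (hm : m ≤ m') : FixesBelow m g :=
  fun j hj => h j (by omega)

lemma FixesBelow.succ {m : ℕ} (h : FixesBelow m g) {i : Fin (2 * n)} (hi : i.val = m)
    (hgi : g (Pi.single i 1) = Pi.single i 1) : FixesBelow (m + 1) g := by
  intro j hj
  obtain hj | hj := Nat.lt_succ_iff_lt_or_eq.1 hj
  · exact h j hj
  · rwa [Fin.ext (hj.trans hi.symm)]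

lemma FixesBelow.map_mem_tailSpace {k : ℕ} (hg : ∀ v w, sip (g v) (g w) = sip v w)
    (hfix : FixesBelow (2 * k) g) {v : Vec n} (hv : v ∈ tailSpace n k) : g v ∈ tailSpace n k := by
  rw [mem_tailSpace_iff_sip] at hv ⊢
  intro j hj
  rw [← hfix j hj, hg, hv j hj]

lemma FixesBelow.foldr_Zt_comp {k : ℕ} (hfix : FixesBelow (2 * k) g) {l : List (Vec n)}
    (hl : ∀ h ∈ l, h ∈ tailSpace n k) : FixesBelow (2 * k) (l.foldr Zt ∘ g) := fun j hj => by
  rw [Function.comp_apply, hfix j hj]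
  exact foldr_Zt_of_sip_eq_zero fun h hh => mem_tailSpace_iff_sip.1 (hl h hh) j hj

lemma FixesBelow.exists_two_mul_add_one {k : ℕ} (hk : k < n)
    (hg : ∀ v w, sip (g v) (g w) = sip v w) (hfix : FixesBelow (2 * k) g) :
    ∃ l : List (Vec n), l.length ≤ 2 ∧ FixesBelow (2 * k + 1) (l.foldr Zt ∘ g) := by
  obtain ⟨p, hp⟩ : ∃ p : Fin (2 * n), p.val = 2 * k := ⟨⟨2 * k, by omega⟩, rfl⟩
  obtain ⟨q, hq⟩ : ∃ q : Fin (2 * n), q.val = 2 * k + 1 := ⟨⟨2 * k + 1, by omega⟩, rfl⟩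
  have hgp : g (Pi.single p 1) ≠ 0 := fun h => by
    simpa [h] using (hg _ _).trans (sip_single_single_of_val_eq hp hq)
  obtain ⟨l, hlen, hlU, hl⟩ := exists_transvections_map exists_sip_eq_one_of_mem_tailSpace
    (hfix.map_mem_tailSpace hg (single_mem_tailSpace hp.ge)) (single_mem_tailSpace hp.ge)
    hgp (by simp)
  exact ⟨l, hlen, (hfix.foldr_Zt_comp hlU).succ hp hl⟩

lemma FixesBelow.exists_two_mul_add_two {k : ℕ} (hk : k < n)
    (hg : ∀ v w, sip (g v) (g w) = sip v w) (hfix : FixesBelow (2 * k + 1) g) :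
    ∃ l : List (Vec n), l.length ≤ 2 ∧ FixesBelow (2 * k + 2) (l.foldr Zt ∘ g) := by
  obtain ⟨p, hp⟩ : ∃ p : Fin (2 * n), p.val = 2 * k := ⟨⟨2 * k, by omega⟩, rfl⟩
  obtain ⟨q, hq⟩ : ∃ q : Fin (2 * n), q.val = 2 * k + 1 := ⟨⟨2 * k + 1, by omega⟩, rfl⟩
  have hpq := sip_single_single_of_val_eq hp hq
  have hgp : g (Pi.single p 1) = Pi.single p 1 := hfix p (by omega)
  have hfix' := hfix.mono (Nat.le_succ _)
  obtain ⟨l, hlen, hl, hlq⟩ := exists_transvections_map_fixing (single_mem_tailSpace hp.ge)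
    (hfix'.map_mem_tailSpace hg (single_mem_tailSpace (i := q) (by omega)))
    (single_mem_tailSpace (i := q) (by omega)) (by simpa [hgp] using (hg _ _).trans hpq) hpq
  refine ⟨l, hlen, ((hfix'.foldr_Zt_comp fun h hh => (hl h hh).1).succ hp ?_).succ hq hlq⟩
  rw [Function.comp_apply, hgp]
  exact foldr_Zt_of_sip_eq_zero fun h hh => (hl h hh).2

end Fixing

lemma exists_fixesBelow {f : Vec n → Vec n} (hf : ∀ v w, sip (f v) (f w) = sip v w) :
    ∀ k ≤ n, ∃ l : List (Vec n), l.length ≤ 4 * k ∧ FixesBelow (2 * k) (l.foldr Zt ∘ f)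
  | 0, _ => ⟨[], le_rfl, fun _ hj => absurd hj (Nat.not_lt_zero _)⟩
  | k + 1, hk => by
    obtain ⟨l, hlen, hfix⟩ := exists_fixesBelow hf k (by omega)
    obtain ⟨l₁, hlen₁, hfix₁⟩ := hfix.exists_two_mul_add_one hk (by simp [sip_foldr_Zt, hf])
    obtain ⟨l₂, hlen₂, hfix₂⟩ := hfix₁.exists_two_mul_add_two hk (by simp [sip_foldr_Zt, hf])
    refine ⟨l₂ ++ l₁ ++ l, by simp only [List.length_append]; omega, ?_⟩
    simpa [FixesBelow, List.foldr_append, mul_add] using hfix₂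

lemma eq_self_of_map_single_eq {ι : Type*} [Fintype ι] [DecidableEq ι]
    {g : (ι → ZMod 2) → ι → ZMod 2} (hadd : ∀ v w, g (v + w) = g v + g w)
    (hfix : ∀ j, g (Pi.single j 1) = Pi.single j 1) (v : ι → ZMod 2) : g v = v := by
  suffices AddMonoidHom.mk' g hadd = AddMonoidHom.id _ from DFunLike.congr_fun this v
  refine AddMonoidHom.functions_ext _ _ _ fun j x => ?_
  obtain rfl | rfl := zmod_two_eq_zero_or_one x
  · simpa using hadd 0 0
  · exact hfix j

/-- Every element of `Sp(2n, F₂)` is a product of at most `4n` symplectic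
transvections (as a linear map on `F₂^{2n}`). -/
theorem symplectic_prod_transvections (n : ℕ)
    (S : Matrix (Fin (2 * n)) (Fin (2 * n)) (ZMod 2)) (hS : S ∈ Sp n) :
    ∃ l : List (Fin (2 * n) → ZMod 2), l.length ≤ 4 * n ∧
      ∀ v, S.mulVec v = l.foldr Zt v := by
  obtain ⟨l, hlen, hfix⟩ := exists_fixesBelow (sip_mulVec_mulVec hS) n le_rfl
  have hid : ∀ v, l.foldr Zt (S *ᵥ v) = v :=
    eq_self_of_map_single_eq (g := l.foldr Zt ∘ (S *ᵥ ·))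
      (fun v w => by simp [mulVec_add, foldr_Zt_add]) fun j => hfix j j.isLt
  refine ⟨l.reverse, by simpa using hlen, fun v => ?_⟩
  calc S *ᵥ v = l.reverse.foldr Zt (l.foldr Zt (S *ᵥ v)) := (foldr_Zt_reverse_foldr_Zt l _).symm
    _ = l.reverse.foldr Zt v := by rw [hid]
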